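/- For every integer n ≥ 5, the generalised Higman group H_n contains a non-abelian free subgroup; that is, there exists an injective group homomorphism from the free group on two generators into H_n. -/

import Mathlib

def higmanRels (n : ℕ) : Set (FreeGroup (ZMod n)) :=
  {r | ∃ i : ZMod n,
    r = FreeGroup.of i * FreeGroup.of (i + 1) * (FreeGroup.of i)⁻¹ * ((FreeGroup.of (i + 1))⁻¹) ^ 2}

abbrev HigmanGroup (n : ℕ) : Type := PresentedGroup (higmanRels n)

/-!
Let `B k = ⟨c₀, …, c_k | c_i c_{i+1} c_i⁻¹ = c_{i+1}²⟩` be a chain of Baumslag–Solitar relations.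
In `B 1 = BS(1,2)`, acting on `ℚ` by `x ↦ 2x` and `x ↦ x + 1`, no nontrivial power of `c₀` is a
power of `c₁`. The group `B (k+1)` maps to the amalgam of `B k` and `B 1` along `c_k = c₀`, and a
ping-pong argument on normal forms shows that `c₀` and `c_{k+1}` generate a free group there
whenever `c₀` and `c_k` have independent powers in `B k`; so by induction `c₀, c_k` is a free
pair in `B k` for every `k ≥ 2`.

Finally `H_{k+l}` maps to the amalgam of `B k` and `B l` over the free group `F₂`, identifying
`(c₀, c_k)` in `B k` with `(c_l, c₀)` in `B l`: the generators `a₀, …, a_k` go along the first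
chain and `a_k, …, a_{k+l} = a₀` along the second. Both edge maps are injective, so `F₂` embeds
in the amalgam, and it is the image of `⟨a₀, a_k⟩`.
-/

open Function

section IndepPowers

variable {G H : Type*} [Group G] [Group H]

def IndepPowers (x y : G) : Prop := ∀ p m : ℤ, x ^ p = y ^ m → p = 0 ∧ m = 0

namespace IndepPowers

variable {x y : G}

theorem of_map (f : G →* H) (h : IndepPowers (f x) (f y)) : IndepPowers x y :=
  fun p m hpm => h p m (by rw [← map_zpow, ← map_zpow, hpm])

theorem map_of_injective {f : G →* H} (hf : Injective f) (h : IndepPowers x y) :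
    IndepPowers (f x) (f y) :=
  fun p m hpm => h p m (hf (by rwa [map_zpow, map_zpow]))

theorem zpow_left_notMem_zpowers (h : IndepPowers x y) {p : ℤ} (hp : p ≠ 0) :
    x ^ p ∉ Subgroup.zpowers y := by
  rintro ⟨m, hm⟩
  exact hp (h p m hm.symm).1

theorem zpow_right_notMem_zpowers (h : IndepPowers x y) {m : ℤ} (hm : m ≠ 0) :
    y ^ m ∉ Subgroup.zpowers x := by
  rintro ⟨p, hp⟩
  exact hm (h p m hp).2

theorem injective_zpowersHom_left (h : IndepPowers x y) : Injective (zpowersHom G x) :=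
  (injective_iff_map_eq_one _).2 fun u hu =>
    toAdd_eq_zero.1 (h u.toAdd 0 (by simpa using hu)).1

theorem injective_zpowersHom_right (h : IndepPowers x y) : Injective (zpowersHom G y) :=
  (injective_iff_map_eq_one _).2 fun u hu =>
    toAdd_eq_zero.1 (h 0 u.toAdd (by simpa using hu.symm)).2

end IndepPowers

theorem indepPowers_of_injective_lift {x y : G} (h : Injective (FreeGroup.lift ![x, y])) :
    IndepPowers x y := by
  have hℤ₂ : IndepPowers (Multiplicative.ofAdd ((1, 0) : ℤ × ℤ)) (Multiplicative.ofAdd (0, 1)) :=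
    fun p m hpm => by simpa [← ofAdd_zsmul, eq_comm] using hpm
  have hfree : IndepPowers (FreeGroup.of (0 : Fin 2)) (FreeGroup.of 1) :=
    hℤ₂.of_map (FreeGroup.lift
      ![Multiplicative.ofAdd ((1, 0) : ℤ × ℤ), Multiplicative.ofAdd ((0, 1) : ℤ × ℤ)])
  simpa using hfree.map_of_injective h

end IndepPowers

namespace FreeGroup

variable {G H : Type*} [Group G] [Group H]

theorem comp_lift_pair (f : G →* H) (x y : G) :
    f.comp (FreeGroup.lift ![x, y]) = FreeGroup.lift ![f x, f y] := by
  ext i; fin_cases i <;> simp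

theorem injective_lift_pair_of_map (f : G →* H) {x y : G}
    (h : Injective (FreeGroup.lift ![f x, f y])) : Injective (FreeGroup.lift ![x, y]) := by
  rw [← comp_lift_pair, MonoidHom.coe_comp] at h
  exact h.of_comp

theorem injective_lift_pair_swap {x y : G} (h : Injective (FreeGroup.lift ![x, y])) :
    Injective (FreeGroup.lift ![y, x]) := by
  have hswap : FreeGroup.lift ![y, x] =
      (FreeGroup.lift ![x, y]).comp (freeGroupCongr (Equiv.swap 0 1)).toMonoidHom := by
    ext i; fin_cases i <;> rfl
  rw [hswap, MonoidHom.coe_comp]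
  exact h.comp (MulEquiv.injective _)

end FreeGroup

namespace Monoid.PushoutI

variable {ι H : Type*} {G : ι → Type*} [Group H] [∀ i, Group (G i)] {φ : ∀ i, H →* G i}

theorem fstIdx_of_smul [DecidableEq ι] [∀ i, DecidableEq (G i)] {d : NormalWord.Transversal φ}
    {i : ι} {g : G i} (hg : g ∉ (φ i).range) {w : NormalWord d} (hw : w.fstIdx ≠ some i) :
    (of (φ := φ) i g • w).fstIdx = some i := by
  rw [← NormalWord.cons_eq_smul g w hw hg]
  simp [NormalWord.cons, CoprodI.Word.fstIdx_cons]

/-- Ping-pong on normal words: a nontrivial power of `of i (g i)` moves every word not starting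
in `G i` to one starting in `G i`. -/
theorem injective_lift_of_zpow_notMem_range [Nontrivial ι] (hφ : ∀ i, Injective (φ i))
    (g : ∀ i, G i) (hg : ∀ i (p : ℤ), p ≠ 0 → g i ^ p ∉ (φ i).range) :
    Injective (FreeGroup.lift fun i => of (φ := φ) i (g i)) := by
  classical
  obtain ⟨d⟩ := NormalWord.transversal_nonempty φ hφ
  have hlift : FreeGroup.lift (fun i => of (φ := φ) i (g i)) =
      (CoprodI.lift fun i => FreeGroup.lift fun _ => of (φ := φ) i (g i)).comp
        freeGroupEquivCoprodI.toMonoidHom := by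
    ext; simp
  rw [hlift, MonoidHom.coe_comp]
  refine Injective.comp ?_ freeGroupEquivCoprodI.injective
  refine CoprodI.lift_injective_of_ping_pong _ ?_
    (fun i => {w : NormalWord d | w.fstIdx = some i}) ?_ ?_ ?_
  · refine Or.inr ⟨Classical.arbitrary ι, ?_⟩
    rw [FreeGroup.freeGroupUnitEquivInt.cardinal_eq, Cardinal.mk_denumerable]
    exact Cardinal.natCast_le_aleph0
  · intro i
    exact ⟨of i (g i) • NormalWord.empty, fstIdx_of_smul (by simpa using hg i 1 one_ne_zero)
      (by simp [NormalWord.empty, CoprodI.Word.fstIdx, CoprodI.Word.empty])⟩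
  · intro i j hij
    exact Set.disjoint_left.2 fun w hi hj => hij (Option.some_injective _ (hi.symm.trans hj))
  · intro i j hij u hu
    obtain ⟨p, rfl⟩ : ∃ p : ℤ, FreeGroup.of () ^ p = u :=
      ⟨FreeGroup.freeGroupUnitEquivInt u, FreeGroup.freeGroupUnitEquivInt.symm_apply_apply u⟩
    have hp : p ≠ 0 := by rintro rfl; exact hu (zpow_zero _)
    rintro _ ⟨w, hw : w.fstIdx = some j, rfl⟩
    rw [map_zpow, FreeGroup.lift_apply_of, ← map_zpow]
    exact fstIdx_of_smul (hg i p hp) (by rw [hw]; exact fun h => hij (Option.some_injective _ h).symm)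

end Monoid.PushoutI

section Amalgam

universe u

variable {H A B : Type u} [Group H] [Group A] [Group B]

abbrev Amalgam.factor (A B : Type u) (b : Bool) : Type u := cond b B A

instance Amalgam.instGroupFactor : ∀ b, Group (Amalgam.factor A B b)
  | false => ‹Group A›
  | true => ‹Group B›

def Amalgam.maps (φ : H →* A) (ψ : H →* B) : ∀ b, H →* Amalgam.factor A B b
  | false => φ
  | true => ψ

abbrev Amalgam (φ : H →* A) (ψ : H →* B) := Monoid.PushoutI (Amalgam.maps φ ψ)

namespace Amalgam

variable (φ : H →* A) (ψ : H →* B)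

def inl : A →* Amalgam φ ψ := Monoid.PushoutI.of (φ := maps φ ψ) false

def inr : B →* Amalgam φ ψ := Monoid.PushoutI.of (φ := maps φ ψ) true

theorem inl_apply_eq_inr (h : H) : inl φ ψ (φ h) = inr φ ψ (ψ h) :=
  (Monoid.PushoutI.of_apply_eq_base (maps φ ψ) false h).trans
    (Monoid.PushoutI.of_apply_eq_base (maps φ ψ) true h).symm

variable {φ ψ}

theorem maps_injective (hφ : Injective φ) (hψ : Injective ψ) : ∀ b, Injective (maps φ ψ b)
  | false => hφ
  | true => hψ

theorem injective_inl_comp (hφ : Injective φ) (hψ : Injective ψ) :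
    Injective ((inl φ ψ).comp φ) := by
  rw [show (inl φ ψ).comp φ = Monoid.PushoutI.base (maps φ ψ) from
    Monoid.PushoutI.of_comp_eq_base (φ := maps φ ψ) false]
  exact Monoid.PushoutI.base_injective (maps_injective hφ hψ)

theorem injective_lift_inl_inr (hφ : Injective φ) (hψ : Injective ψ) {a : A} {b : B}
    (ha : ∀ p : ℤ, p ≠ 0 → a ^ p ∉ φ.range) (hb : ∀ m : ℤ, m ≠ 0 → b ^ m ∉ ψ.range) :
    Injective (FreeGroup.lift ![inl φ ψ a, inr φ ψ b]) := by
  let g : ∀ i, factor A B i := fun | false => a | true => b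
  have hg : ∀ i (p : ℤ), p ≠ 0 → g i ^ p ∉ (maps φ ψ i).range
    | false => ha
    | true => hb
  have hlift : FreeGroup.lift ![inl φ ψ a, inr φ ψ b] =
      (FreeGroup.lift fun i => Monoid.PushoutI.of i (g i)).comp
        (FreeGroup.freeGroupCongr finTwoEquiv).toMonoidHom := by
    ext i; fin_cases i <;> rfl
  rw [hlift, MonoidHom.coe_comp]
  exact (Monoid.PushoutI.injective_lift_of_zpow_notMem_range (maps_injective hφ hψ) g hg).comp
    (MulEquiv.injective _)

end Amalgam

end Amalgam

section BSRelator

variable {G H : Type*} [Group G] [Group H]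

def bsRelator (x y : G) : G := x * y * x⁻¹ * (y⁻¹) ^ 2

theorem map_bsRelator (f : G →* H) (x y : G) : f (bsRelator x y) = bsRelator (f x) (f y) := by
  simp [bsRelator]

theorem bsRelator_eq_one {x y : G} : bsRelator x y = 1 ↔ x * y * x⁻¹ = y ^ 2 := by
  rw [bsRelator, inv_pow, mul_inv_eq_one]

end BSRelator

def bsChainRels (k : ℕ) : Set (FreeGroup ℕ) :=
  {r | ∃ i < k, r = bsRelator (FreeGroup.of i) (FreeGroup.of (i + 1))}

-- The generators `gen i` with `i > k` are free and play no role; indexing by `ℕ` avoids `Fin`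
-- arithmetic.
abbrev BSChain (k : ℕ) : Type := PresentedGroup (bsChainRels k)

namespace BSChain

variable {G : Type*} [Group G] {k l : ℕ}

def gen (i : ℕ) : BSChain k := PresentedGroup.of i

theorem gen_conj {i : ℕ} (hi : i < k) :
    (gen i : BSChain k) * gen (i + 1) * (gen i)⁻¹ = gen (i + 1) ^ 2 := by
  rw [← bsRelator_eq_one]
  change bsRelator (PresentedGroup.mk _ (FreeGroup.of i)) (PresentedGroup.mk _ (FreeGroup.of _)) = 1
  rw [← map_bsRelator]
  exact PresentedGroup.one_of_mem ⟨i, hi, rfl⟩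

theorem map_gen_conj (f : BSChain k →* G) {i : ℕ} (hi : i < k) :
    f (gen i) * f (gen (i + 1)) * (f (gen i))⁻¹ = f (gen (i + 1)) ^ 2 := by
  rw [← map_inv, ← map_mul, ← map_mul, ← map_pow, gen_conj hi]

def lift (c : ℕ → G) (hc : ∀ i < k, c i * c (i + 1) * (c i)⁻¹ = c (i + 1) ^ 2) :
    BSChain k →* G :=
  PresentedGroup.toGroup (f := c) <| by
    rintro _ ⟨i, hi, rfl⟩
    rw [map_bsRelator, FreeGroup.lift_apply_of, FreeGroup.lift_apply_of, bsRelator_eq_one]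
    exact hc i hi

@[simp]
theorem lift_gen (c : ℕ → G) (hc) (i : ℕ) : lift (k := k) c hc (gen i) = c i :=
  PresentedGroup.toGroup.of _

section Append

variable (f : BSChain k →* G) (g : BSChain l →* G)

def concat (i : ℕ) : G := if i ≤ k then f (gen i) else g (gen (i - k))

variable {f g}

theorem concat_of_le {i : ℕ} (hi : i ≤ k) : concat f g i = f (gen i) := if_pos hi

theorem concat_add (h : f (gen k) = g (gen 0)) (j : ℕ) : concat f g (k + j) = g (gen j) := by
  rcases j.eq_zero_or_pos with rfl | hj
  · rw [Nat.add_zero, concat_of_le le_rfl, h]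
  · rw [concat, if_neg (by omega), Nat.add_sub_cancel_left]

def append (h : f (gen k) = g (gen 0)) : BSChain (k + l) →* G :=
  lift (concat f g) fun i hi => by
    rcases lt_or_ge i k with hik | hki
    · rw [concat_of_le hik.le, concat_of_le hik]
      exact map_gen_conj f hik
    · obtain ⟨j, rfl⟩ := Nat.exists_eq_add_of_le hki
      rw [concat_add h, add_assoc, concat_add h]
      exact map_gen_conj g (by omega)

theorem append_gen_of_le (h : f (gen k) = g (gen 0)) {i : ℕ} (hi : i ≤ k) :
    append h (gen i) = f (gen i) := by
  rw [append, lift_gen, concat_of_le hi]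

theorem append_gen_add (h : f (gen k) = g (gen 0)) (j : ℕ) :
    append h (gen (k + j)) = g (gen j) := by
  rw [append, lift_gen, concat_add h]

end Append

theorem indepPowers_gen_zero_one : IndepPowers (gen 0 : BSChain 1) (gen 1) := by
  intro p m h
  let expSum : BSChain 1 →* Multiplicative ℤ :=
    lift (fun i => if i = 0 then Multiplicative.ofAdd 1 else 1) (by simp)
  let affine : BSChain 1 →* Equiv.Perm ℚ :=
    lift (fun i => if i = 0 then Equiv.mulLeft₀ 2 two_ne_zero else Equiv.addRight 1) <| by
      simp only [Nat.lt_one_iff, forall_eq, Nat.zero_add, one_ne_zero, if_true, if_false]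
      rw [mul_inv_eq_iff_eq_mul]
      ext x
      simp only [Equiv.Perm.mul_apply, Equiv.coe_addRight, Equiv.mulLeft₀_apply, sq]
      ring
  have hp : p = 0 := by simpa [expSum] using congrArg expSum h
  subst hp
  have hm : (m : ℚ) = 0 := by simpa [affine] using congrArg (fun σ => affine σ 0) h.symm
  exact ⟨rfl, by exact_mod_cast hm⟩

theorem injective_lift_gen_succ (h : IndepPowers (gen 0 : BSChain k) (gen k)) :
    Injective (FreeGroup.lift ![(gen 0 : BSChain (k + 1)), gen (k + 1)]) := by
  let φ := zpowersHom (BSChain k) (gen k)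
  let ψ := zpowersHom (BSChain 1) (gen 0)
  have glue : Amalgam.inl φ ψ (gen k) = Amalgam.inr φ ψ (gen 0) := by
    simpa [φ, ψ] using Amalgam.inl_apply_eq_inr φ ψ (Multiplicative.ofAdd 1)
  refine FreeGroup.injective_lift_pair_of_map (append glue) ?_
  rw [append_gen_of_le glue (Nat.zero_le k), append_gen_add glue 1]
  exact Amalgam.injective_lift_inl_inr h.injective_zpowersHom_right
    indepPowers_gen_zero_one.injective_zpowersHom_left
    (fun p hp => h.zpow_left_notMem_zpowers hp)
    (fun m hm => indepPowers_gen_zero_one.zpow_right_notMem_zpowers hm)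

theorem indepPowers_gen (hk : 1 ≤ k) : IndepPowers (gen 0 : BSChain k) (gen k) := by
  induction k, hk using Nat.le_induction with
  | base => exact indepPowers_gen_zero_one
  | succ k _ ih => exact indepPowers_of_injective_lift (injective_lift_gen_succ ih)

theorem injective_lift_gen (hk : 2 ≤ k) :
    Injective (FreeGroup.lift ![(gen 0 : BSChain k), gen k]) := by
  obtain ⟨k, rfl⟩ : ∃ j, k = j + 1 := ⟨k - 1, by omega⟩
  exact injective_lift_gen_succ (indepPowers_gen (by omega))

end BSChain

namespace HigmanGroup

open BSChain

section Lift

variable {G : Type*} [Group G] {n : ℕ} [NeZero n]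

def liftBSChain (f : BSChain n →* G) (hf : f (gen n) = f (gen 0)) : HigmanGroup n →* G :=
  PresentedGroup.toGroup (f := fun i => f (gen i.val)) <| by
    rintro _ ⟨i, rfl⟩
    change FreeGroup.lift _ (bsRelator (FreeGroup.of i) (FreeGroup.of (i + 1))) = 1
    rw [map_bsRelator, FreeGroup.lift_apply_of, FreeGroup.lift_apply_of, bsRelator_eq_one]
    have hsucc : f (gen (i + 1).val) = f (gen (i.val + 1)) := by
      rw [ZMod.val_add, ZMod.val_one_eq_one_mod, Nat.add_mod_mod]
      obtain hlt | heq : i.val + 1 < n ∨ i.val + 1 = n := by have := ZMod.val_lt i; omega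
      · rw [Nat.mod_eq_of_lt hlt]
      · rw [heq, Nat.mod_self, hf]
    rw [hsucc]
    exact map_gen_conj f (ZMod.val_lt i)

theorem liftBSChain_of (f : BSChain n →* G) (hf) (i : ZMod n) :
    liftBSChain f hf (PresentedGroup.of i) = f (gen i.val) :=
  PresentedGroup.toGroup.of _

end Lift

theorem injective_lift_of_zero_of {k l : ℕ} (hk : 2 ≤ k) (hl : 2 ≤ l) :
    Injective (FreeGroup.lift
      ![(PresentedGroup.of 0 : HigmanGroup (k + l)), PresentedGroup.of (k : ZMod (k + l))]) := by
  have : NeZero (k + l) := ⟨by omega⟩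
  let φ : FreeGroup (Fin 2) →* BSChain k := FreeGroup.lift ![gen 0, gen k]
  let ψ : FreeGroup (Fin 2) →* BSChain l := FreeGroup.lift ![gen l, gen 0]
  have hφ : Injective φ := injective_lift_gen hk
  have hψ : Injective ψ := FreeGroup.injective_lift_pair_swap (injective_lift_gen hl)
  have glue_start : Amalgam.inl φ ψ (gen 0) = Amalgam.inr φ ψ (gen l) := by
    simpa [φ, ψ] using Amalgam.inl_apply_eq_inr φ ψ (FreeGroup.of 0)
  have glue_end : Amalgam.inl φ ψ (gen k) = Amalgam.inr φ ψ (gen 0) := by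
    simpa [φ, ψ] using Amalgam.inl_apply_eq_inr φ ψ (FreeGroup.of 1)
  let ρ := append glue_end
  have hρ : ρ (gen (k + l)) = ρ (gen 0) := by
    rw [append_gen_add, append_gen_of_le glue_end (Nat.zero_le k), glue_start]
  refine FreeGroup.injective_lift_pair_of_map (liftBSChain ρ hρ) ?_
  rw [liftBSChain_of, liftBSChain_of, ZMod.val_zero, ZMod.val_natCast_of_lt (by omega),
    append_gen_of_le glue_end (Nat.zero_le k), append_gen_of_le glue_end le_rfl,
    ← FreeGroup.comp_lift_pair]
  exact Amalgam.injective_inl_comp hφ hψ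

end HigmanGroup

theorem higman_has_free_subgroup (n : ℕ) (hn : 5 ≤ n) :
    ∃ f : FreeGroup (Fin 2) →* HigmanGroup n, Function.Injective f := by
  obtain ⟨l, rfl⟩ : ∃ l, n = 2 + l := ⟨n - 2, by omega⟩
  exact ⟨_, HigmanGroup.injective_lift_of_zero_of le_rfl (by omega)⟩
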